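/- arXiv:2012.09047 — 4 statements merged into one kernel-verified Lean document; each statement's English description precedes it below -/
import Mathlib

section
/- Let A be a finite set, φ: A^ω → ℝ a continuous payoff satisfying: for all u ∈ A* and α, β ∈ A^ω, φ(α) ≤ φ(β) implies φ(uα) ≤ φ(uβ). Then for all u ∈ A⁺ and α ∈ A^ω, min{φ(u^ω), φ(α)} ≤ φ(uα) ≤ max{φ(u^ω), φ(α)}, where u^ω is the infinite word obtained by repeating u. -/
open Filter Topology

/-- Concatenation of a finite word with an infinite word. -/
def wcat {A : Type*} (u : List A) (β : ℕ → A) : ℕ → A :=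
  fun n => if h : n < u.length then u.get ⟨n, h⟩ else β (n - u.length)

/-- The periodic infinite word `u^ω` obtained by repeating the finite word `u`. -/
noncomputable def wpow {A : Type*} [Nonempty A] (u : List A) : ℕ → A :=
  fun n => u.getD (n % u.length) (Classical.arbitrary A)

lemma wcat_iterate_eq {A : Type*} [Nonempty A] (u : List A) (α : ℕ → A)
    (n k : ℕ) (hk : k < n * u.length) :
    (wcat u)^[n] α k = wpow u k := by
  induction n generalizing k with
  | zero => omega
  | succ n ih =>
    rw [Function.iterate_succ_apply']
    have e : wcat u ((wcat u)^[n] α) k =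
        if h : k < u.length then u.get ⟨k, h⟩ else (wcat u)^[n] α (k - u.length) := rfl
    rw [e]
    split_ifs with h
    · simp [wpow, Nat.mod_eq_of_lt h, List.getElem?_eq_getElem h]
    · push_neg at h
      have h2 : k - u.length < n * u.length := by
        rw [Nat.succ_mul] at hk; omega
      rw [ih _ h2]
      unfold wpow
      congr 1
      conv_rhs => rw [show k = (k - u.length) + u.length from by omega]
      rw [Nat.add_mod_right]

lemma wcat_iterate_tendsto {A : Type*} [Nonempty A] [TopologicalSpace A]
    [DiscreteTopology A] (u : List A) (hu : u ≠ []) (α : ℕ → A) :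
    Tendsto (fun n => (wcat u)^[n] α) atTop (𝓝 (wpow u)) := by
  rw [tendsto_pi_nhds]
  intro k
  have hlen : 1 ≤ u.length := List.length_pos_iff.mpr hu
  have hev : ∀ᶠ n in atTop, (wcat u)^[n] α k = wpow u k := by
    filter_upwards [eventually_ge_atTop (k + 1)] with n hn
    exact wcat_iterate_eq u α n k (by nlinarith)
  exact Tendsto.congr' (hev.mono fun n h => h.symm) tendsto_const_nhds

theorem condition_a_implies_condition_b
    {A : Type*} [Fintype A] [Nonempty A] [TopologicalSpace A] [DiscreteTopology A]
    (φ : (ℕ → A) → ℝ) (hcont : Continuous φ)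
    (ha : ∀ (u : List A) (α β : ℕ → A), φ α ≤ φ β → φ (wcat u α) ≤ φ (wcat u β))
    (u : List A) (hu : u ≠ []) (α : ℕ → A) :
    min (φ (wpow u)) (φ α) ≤ φ (wcat u α) ∧
      φ (wcat u α) ≤ max (φ (wpow u)) (φ α) := by
  have htend : Tendsto (fun n => φ ((wcat u)^[n] α)) atTop (𝓝 (φ (wpow u))) :=
    (hcont.tendsto _).comp (wcat_iterate_tendsto u hu α)
  rcases le_total (φ α) (φ (wcat u α)) with h | h
  · -- increasing case
    have mono : Monotone (fun n => φ ((wcat u)^[n] α)) := by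
      apply monotone_nat_of_le_succ
      intro n
      induction n with
      | zero => simpa using h
      | succ n ih =>
        simp only [Function.iterate_succ_apply'] at *
        exact ha u _ _ ih
    have h1 : φ (wcat u α) ≤ φ (wpow u) := by
      apply ge_of_tendsto htend
      filter_upwards [eventually_ge_atTop 1] with n hn
      have := mono hn
      simpa using this
    constructor
    · exact le_trans (min_le_right _ _) h
    · exact le_trans h1 (le_max_left _ _)
  · -- decreasing case
    have anti : Antitone (fun n => φ ((wcat u)^[n] α)) := by
      apply antitone_nat_of_succ_le
      intro n
      induction n with
      | zero => simpa using h
      | succ n ih =>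
        simp only [Function.iterate_succ_apply'] at *
        exact ha u _ _ ih
    have h1 : φ (wpow u) ≤ φ (wcat u α) := by
      apply le_of_tendsto htend
      filter_upwards [eventually_ge_atTop 1] with n hn
      have := anti hn
      simpa using this
    constructor
    · exact le_trans (min_le_left _ _) h1
    · exact le_trans h (le_max_right _ _)
end

section
/- Let A be a finite set and φ: A^ω → ℝ continuous, satisfying: for all u ∈ A* and α, β ∈ A^ω, φ(α) ≤ φ(β) implies φ(uα) ≤ φ(uβ). Then for any sequence of nonempty finite words (x_n)_{n≥0}, if φ(x₀x₁x₂…) > sup_{n≥0} φ(x_n^ω) then φ(x₀x₁x₂…) ≤ φ(x₀x₂x₄…). -/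
open Filter Topology

/-- `γ` is the infinite concatenation `x₀x₁x₂…` of the nonempty finite words `x n`. -/
def IsInfiniteConcat {A : Type*} (x : ℕ → List A) (γ : ℕ → A) : Prop :=
  ∀ (k i : ℕ) (h : i < (x k).length),
    γ ((∑ j ∈ Finset.range k, (x j).length) + i) = (x k).get ⟨i, h⟩

/-!
Write `Tₖ = xₖxₖ₊₁…` for the tails of `γ = x₀x₁x₂…`. If `φ β ≤ φ (uβ)`, prefix monotonicity
makes `k ↦ φ (uᵏβ)` nondecreasing, and `uᵏβ → u^ω`, so `φ (uβ) ≤ φ (u^ω)`. Applied to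
`Tₖ = xₖTₖ₊₁`, this gives `φ Tₖ < φ Tₖ₊₁` whenever `φ (xₖ^ω) < φ Tₖ`; as every `φ (xₖ^ω)` lies
below `φ γ = φ T₀`, induction yields `φ T₀ < φ T₁ < φ T₂ < ⋯`. So replacing `T₂ₙ₊₁` by `T₂ₙ₊₂`,
i.e. deleting `x₂ₙ₊₁`, does not decrease `φ`, and by prefix monotonicity neither does it behind
`x₀x₂…x₂ₙ`. Deleting the odd words one at a time gives `zₙ = x₀x₂…x₂ₙ₋₂T₂ₙ` with
`φ γ = φ z₀ ≤ φ z₁ ≤ ⋯`, and `zₙ → x₀x₂x₄…`.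
-/

section

variable {A : Type*}

/-- Condition (a). -/
def PrefixMonotone (φ : (ℕ → A) → ℝ) : Prop :=
  ∀ (u : List A) (α β : ℕ → A), φ α ≤ φ β → φ (wcat u α) ≤ φ (wcat u β)

def wdrop (n : ℕ) (γ : ℕ → A) : ℕ → A := fun i => γ (n + i)

/-- The finite word `x₀x₁…xₖ₋₁`. -/
def wjoin (x : ℕ → List A) : ℕ → List A
  | 0 => []
  | k + 1 => wjoin x k ++ x k

section Words

@[simp]
lemma wdrop_zero (γ : ℕ → A) : wdrop 0 γ = γ := by
  funext i
  simp [wdrop]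

@[simp]
lemma wcat_nil (β : ℕ → A) : wcat [] β = β := by
  funext n
  simp [wcat]

lemma wcat_apply_of_lt (u : List A) (β : ℕ → A) {n : ℕ} (h : n < u.length) :
    wcat u β n = u[n] :=
  dif_pos h

lemma wcat_length_add (u : List A) (β : ℕ → A) (m : ℕ) : wcat u β (u.length + m) = β m := by
  simp [wcat]

lemma wcat_append (u v : List A) (β : ℕ → A) : wcat (u ++ v) β = wcat u (wcat v β) := by
  funext n
  by_cases hn : n < u.length
  · rw [wcat_apply_of_lt _ _ (by simp; omega), wcat_apply_of_lt _ _ hn, List.getElem_append_left]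
  · obtain ⟨m, rfl⟩ := Nat.exists_eq_add_of_le (not_lt.1 hn)
    rw [wcat_length_add]
    by_cases hm : m < v.length
    · rw [wcat_apply_of_lt _ _ (by simp; omega), wcat_apply_of_lt _ _ hm,
        List.getElem_append_right (by omega)]
      simp
    · obtain ⟨k, rfl⟩ := Nat.exists_eq_add_of_le (not_lt.1 hm)
      rw [wcat_length_add, ← Nat.add_assoc, ← List.length_append, wcat_length_add]

lemma wdrop_eq_wcat {n : ℕ} {u : List A} {γ : ℕ → A}
    (h : ∀ (i : ℕ) (hi : i < u.length), γ (n + i) = u[i]) :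
    wdrop n γ = wcat u (wdrop (n + u.length) γ) := by
  funext i
  by_cases hi : i < u.length
  · rw [wcat_apply_of_lt _ _ hi]
    exact h i hi
  · obtain ⟨m, rfl⟩ := Nat.exists_eq_add_of_le (not_lt.1 hi)
    simp only [wdrop, wcat_length_add, Nat.add_assoc]

lemma wcat_wpow [Nonempty A] (u : List A) : wcat u (wpow u) = wpow u := by
  funext n
  by_cases hn : n < u.length
  · simp [wcat_apply_of_lt _ _ hn, wpow, Nat.mod_eq_of_lt hn, List.getElem?_eq_getElem hn]
  · obtain ⟨m, rfl⟩ := Nat.exists_eq_add_of_le (not_lt.1 hn)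
    simp [wcat_length_add, wpow]

lemma iterate_wcat_apply [Nonempty A] {u : List A} {β : ℕ → A} {k n : ℕ}
    (h : n < k * u.length) : (wcat u)^[k] β n = wpow u n := by
  induction k generalizing n with
  | zero => simp at h
  | succ k ih =>
    rw [Function.iterate_succ_apply', ← wcat_wpow u]
    by_cases hn : n < u.length
    · rw [wcat_apply_of_lt _ _ hn, wcat_apply_of_lt _ _ hn]
    · obtain ⟨m, rfl⟩ := Nat.exists_eq_add_of_le (not_lt.1 hn)
      rw [wcat_length_add, wcat_length_add, ih (by rw [Nat.succ_mul] at h; omega)]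

lemma tendsto_iterate_wcat [Nonempty A] [TopologicalSpace A] {u : List A} (hu : u ≠ [])
    (β : ℕ → A) : Tendsto (fun k => (wcat u)^[k] β) atTop (𝓝 (wpow u)) := by
  have hlen : 0 < u.length := List.length_pos_iff.mpr hu
  refine tendsto_pi_nhds.2 fun n => tendsto_const_nhds.congr' ?_
  filter_upwards [eventually_gt_atTop n] with k hk
  exact (iterate_wcat_apply (by nlinarith)).symm

lemma tendsto_wcat [TopologicalSpace A] {p : ℕ → List A} {β β' : ℕ → ℕ → A} {δ : ℕ → A}
    (hδ : ∀ N, δ = wcat (p N) (β' N)) (hp : Tendsto (fun N => (p N).length) atTop atTop) :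
    Tendsto (fun N => wcat (p N) (β N)) atTop (𝓝 δ) := by
  refine tendsto_pi_nhds.2 fun n => tendsto_const_nhds.congr' ?_
  filter_upwards [hp.eventually_gt_atTop n] with N hN
  rw [hδ N, wcat_apply_of_lt _ _ hN, wcat_apply_of_lt _ _ hN]

end Words

section Concat

variable {x : ℕ → List A}

lemma wjoin_succ (x : ℕ → List A) (k : ℕ) : wjoin x (k + 1) = wjoin x k ++ x k :=
  rfl

lemma length_wjoin (x : ℕ → List A) (k : ℕ) :
    (wjoin x k).length = ∑ j ∈ Finset.range k, (x j).length := by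
  induction k with
  | zero => rfl
  | succ k ih => rw [wjoin_succ, List.length_append, ih, Finset.sum_range_succ]

lemma le_length_wjoin (hx : ∀ n, x n ≠ []) (k : ℕ) : k ≤ (wjoin x k).length := by
  induction k with
  | zero => exact le_rfl
  | succ k ih =>
    rw [wjoin_succ, List.length_append]
    have := List.length_pos_iff.mpr (hx k)
    omega

namespace IsInfiniteConcat

variable {γ : ℕ → A}

lemma wdrop_eq_wcat (hγ : IsInfiniteConcat x γ) (k : ℕ) :
    wdrop (wjoin x k).length γ = wcat (x k) (wdrop (wjoin x (k + 1)).length γ) := by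
  rw [wjoin_succ x k, List.length_append]
  refine _root_.wdrop_eq_wcat fun i hi => ?_
  rw [length_wjoin]
  exact hγ k i hi

lemma eq_wcat_wjoin (hγ : IsInfiniteConcat x γ) (k : ℕ) :
    γ = wcat (wjoin x k) (wdrop (wjoin x k).length γ) := by
  induction k with
  | zero => simp [wjoin]
  | succ k ih => rw [wjoin_succ x k, wcat_append, ← wjoin_succ, ← hγ.wdrop_eq_wcat, ← ih]

end IsInfiniteConcat

end Concat

section PrefixMonotone

variable [Nonempty A] [TopologicalSpace A] {φ : (ℕ → A) → ℝ}

theorem PrefixMonotone.le_wpow_of_le_wcat (ha : PrefixMonotone φ) (hcont : Continuous φ)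
    {u : List A} (hu : u ≠ []) {β : ℕ → A} (h : φ β ≤ φ (wcat u β)) :
    φ (wcat u β) ≤ φ (wpow u) := by
  have hmono : Monotone fun k => φ ((wcat u)^[k] β) := by
    refine monotone_nat_of_le_succ fun k => ?_
    induction k with
    | zero => exact h
    | succ k ih =>
      rw [Function.iterate_succ_apply', Function.iterate_succ_apply' _ (k + 1)]
      exact ha u _ _ ih
  exact hmono.ge_of_tendsto ((hcont.tendsto _).comp (tendsto_iterate_wcat hu β)) 1

variable {x : ℕ → List A} {γ : ℕ → A}

lemma IsInfiniteConcat.wdrop_lt_wdrop_succ (hγ : IsInfiniteConcat x γ) (ha : PrefixMonotone φ)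
    (hcont : Continuous φ) (hx : ∀ n, x n ≠ []) {k : ℕ}
    (hk : φ (wpow (x k)) < φ (wdrop (wjoin x k).length γ)) :
    φ (wdrop (wjoin x k).length γ) < φ (wdrop (wjoin x (k + 1)).length γ) := by
  rw [hγ.wdrop_eq_wcat] at hk ⊢
  by_contra! h
  exact (ha.le_wpow_of_le_wcat hcont (hx k) h).not_gt hk

lemma IsInfiniteConcat.monotone_wdrop (hγ : IsInfiniteConcat x γ) (ha : PrefixMonotone φ)
    (hcont : Continuous φ) (hx : ∀ n, x n ≠ []) (hlt : ∀ n, φ (wpow (x n)) < φ γ) :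
    Monotone fun k => φ (wdrop (wjoin x k).length γ) := by
  have hle : ∀ k, φ γ ≤ φ (wdrop (wjoin x k).length γ) := by
    intro k
    induction k with
    | zero => simp [wjoin]
    | succ k ih => exact ih.trans (hγ.wdrop_lt_wdrop_succ ha hcont hx ((hlt k).trans_le ih)).le
  exact monotone_nat_of_le_succ fun k =>
    (hγ.wdrop_lt_wdrop_succ ha hcont hx ((hlt k).trans_le (hle k))).le

end PrefixMonotone

end

theorem condition_a_implies_condition_c
    {A : Type*} [Fintype A] [Nonempty A] [TopologicalSpace A] [DiscreteTopology A]
    (φ : (ℕ → A) → ℝ) (hcont : Continuous φ)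
    (ha : ∀ (u : List A) (α β : ℕ → A), φ α ≤ φ β → φ (wcat u α) ≤ φ (wcat u β))
    (x : ℕ → List A) (hx : ∀ n, x n ≠ [])
    (γ : ℕ → A) (hγ : IsInfiniteConcat x γ)
    (δ : ℕ → A) (hδ : IsInfiniteConcat (fun n => x (2 * n)) δ)
    (hsup : (⨆ n : ℕ, φ (wpow (x n))) < φ γ) :
    φ γ ≤ φ δ := by
  have hbdd : BddAbove (Set.range fun n => φ (wpow (x n))) :=
    (isCompact_range hcont).bddAbove.mono (Set.range_comp_subset_range _ φ)
  have hlt : ∀ n, φ (wpow (x n)) < φ γ := fun n => (le_ciSup hbdd n).trans_lt hsup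
  have hT := hγ.monotone_wdrop ha hcont hx hlt
  set y : ℕ → List A := fun n => x (2 * n)
  let z : ℕ → ℕ → A := fun N => wcat (wjoin y N) (wdrop (wjoin x (2 * N)).length γ)
  have hz : Monotone fun N => φ (z N) := monotone_nat_of_le_succ fun N => by
    calc φ (z N) = φ (wcat (wjoin y (N + 1)) (wdrop (wjoin x (2 * N + 1)).length γ)) := by
          rw [wjoin_succ _ N, wcat_append, ← hγ.wdrop_eq_wcat]
      _ ≤ φ (z (N + 1)) := ha _ _ _ (hT (by omega))
  have hzδ : Tendsto z atTop (𝓝 δ) :=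
    tendsto_wcat hδ.eq_wcat_wjoin (tendsto_atTop_mono (le_length_wjoin fun n => hx _) tendsto_id)
  have hz0 : z 0 = γ := by simp [z, wjoin]
  exact ge_of_tendsto' ((hcont.tendsto δ).comp hzδ) fun N => hz0 ▸ hz (Nat.zero_le N)
end

section
/- Let φ: A^ω → ℝ be continuous and shift-deterministic. Then for each a ∈ A, the induced map s[a]: φ(A^ω) → φ(A^ω) with s[a](φ(β)) = φ(aβ) is continuous (with respect to the subspace topology of ℝ on φ(A^ω)). -/
open Filter Topology

/-- A payoff is shift-deterministic if `φ(β) = φ(γ)` implies `φ(aβ) = φ(aγ)`. -/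
def ShiftDet {A : Type*} (φ : (ℕ → A) → ℝ) : Prop :=
  ∀ (a : A) (β γ : ℕ → A), φ β = φ γ → φ (wcat [a] β) = φ (wcat [a] γ)

/-!
Since `A^ω` is compact and `ℝ` is Hausdorff, `φ` is a quotient map onto its image; as
`s ∘ φ = φ ∘ (a · _)` is continuous, `s` is continuous on that image.
-/

theorem continuous_wcat {A : Type*} [TopologicalSpace A] (u : List A) :
    Continuous (wcat u) := by
  refine continuous_pi fun n => ?_
  by_cases h : n < u.length
  · simpa only [wcat, h, dite_true] using continuous_const
  · simpa only [wcat, h, dite_false] using continuous_apply (n - u.length)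

theorem continuousOn_range_of_continuous_comp {X Y Z : Type*} [TopologicalSpace X]
    [CompactSpace X] [TopologicalSpace Y] [T2Space Y] [TopologicalSpace Z] {f : X → Y}
    (hf : Continuous f) {g : Y → Z} (hg : Continuous (g ∘ f)) :
    ContinuousOn g (Set.range f) := by
  have hfr : Continuous (Set.rangeFactorization f) := hf.subtype_mk _
  have hq : IsQuotientMap (Set.rangeFactorization f) :=
    hfr.isClosedMap.isQuotientMap hfr Set.rangeFactorization_surjective
  rw [continuousOn_iff_continuous_domRestrict, hq.continuous_iff]
  exact hg

theorem shift_map_continuous_general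
    {A : Type*} [Fintype A] [TopologicalSpace A] [DiscreteTopology A]
    (φ : (ℕ → A) → ℝ) (hcont : Continuous φ)
    (a : A) (s : ℝ → ℝ) (hs : ∀ β : ℕ → A, s (φ β) = φ (wcat [a] β)) :
    ContinuousOn s (Set.range φ) := by
  have hsφ : s ∘ φ = φ ∘ wcat [a] := funext hs
  refine continuousOn_range_of_continuous_comp hcont ?_
  rw [hsφ]
  exact hcont.comp (continuous_wcat [a])

/-- For a continuous shift-deterministic payoff, each induced shift map
`s[a] : φ(A^ω) → φ(A^ω)` with `s[a](φ β) = φ(aβ)` is continuous on the image `φ(A^ω)`. -/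
theorem shift_map_continuous
    {A : Type*} [Fintype A] [Nonempty A] [TopologicalSpace A] [DiscreteTopology A]
    (φ : (ℕ → A) → ℝ) (hcont : Continuous φ) (hsd : ShiftDet φ)
    (a : A) (s : ℝ → ℝ) (hs : ∀ β : ℕ → A, s (φ β) = φ (wcat [a] β)) :
    ContinuousOn s (Set.range φ) :=
  shift_map_continuous_general φ hcont a s hs
end

section
/- Let A be a finite set and φ: A^ω → ℝ a continuous payoff such that for every letter a ∈ A there exist λ(a) ∈ [0,1) and w(a) ∈ ℝ with φ(aβ) = λ(a)φ(β) + w(a) for all β ∈ A^ω. Then φ is multi-discounted: φ(a₁a₂a₃…) = Σ_{n=1}^∞ λ(a₁)·…·λ(a_{n-1})·w(a_n) for every a₁a₂a₃… ∈ A^ω. -/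
/-!
Unrolling the affine relation `n` times gives
`φ α = ∑_{i<n} λ(α₀)⋯λ(α_{i-1}) w(α_i) + λ(α₀)⋯λ(α_{n-1}) φ(α_n α_{n+1} ⋯)`.
As `A` is finite, `λ ≤ c` for some `c < 1`, and `φ` is bounded since `A^ω` is compact,
so the remainder is `O(cⁿ)` and the series converges absolutely to `φ α`.
-/

open Filter Topology

open Finset

theorem wcat_singleton_head_tail {A : Type*} (β : ℕ → A) :
    wcat [β 0] (fun k => β (k + 1)) = β := by
  funext k
  rcases k with _ | k <;> simp [wcat]

theorem eq_sum_range_add_prod_mul_shift {A : Type*} (φ : (ℕ → A) → ℝ) (l w : A → ℝ)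
    (haff : ∀ (a : A) (β : ℕ → A), φ (wcat [a] β) = l a * φ β + w a) (α : ℕ → A) (n : ℕ) :
    φ α = ∑ i ∈ range n, (∏ j ∈ range i, l (α j)) * w (α i)
      + (∏ j ∈ range n, l (α j)) * φ (fun k => α (n + k)) := by
  induction n with
  | zero => simp
  | succ n ih =>
    have hsplit : wcat [α n] (fun k => α (n + (k + 1))) = fun k => α (n + k) :=
      wcat_singleton_head_tail fun k => α (n + k)
    have hstep := haff (α n) fun k => α (n + (k + 1))
    have hshift : (fun k => α (n + 1 + k)) = fun k => α (n + (k + 1)) := by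
      funext k
      rw [add_right_comm, add_assoc]
    rw [hsplit] at hstep
    rw [ih, hstep, hshift, sum_range_succ, prod_range_succ]
    ring

theorem norm_prod_range_mul_le_pow_mul {A : Type*} {l : A → ℝ} {c M x : ℝ}
    (hl : ∀ a, 0 ≤ l a) (hlc : ∀ a, l a ≤ c) (hx : ‖x‖ ≤ M) (α : ℕ → A) (n : ℕ) :
    ‖(∏ i ∈ range n, l (α i)) * x‖ ≤ c ^ n * M := by
  have hprod : ∏ i ∈ range n, l (α i) ≤ c ^ n := by
    simpa using prod_le_prod (s := range n) (fun i _ => hl (α i)) (fun i _ => hlc (α i))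
  have hprod_nonneg : 0 ≤ ∏ i ∈ range n, l (α i) := prod_nonneg fun i _ => hl (α i)
  rw [norm_mul, Real.norm_of_nonneg hprod_nonneg]
  exact mul_le_mul hprod hx (norm_nonneg x) (hprod_nonneg.trans hprod)

theorem summable_norm_of_norm_le_geometric {E : Type*} [SeminormedAddCommGroup E] {f : ℕ → E}
    {c M : ℝ} (hc₀ : 0 ≤ c) (hc₁ : c < 1) (hf : ∀ n, ‖f n‖ ≤ c ^ n * M) :
    Summable fun n => ‖f n‖ :=
  .of_nonneg_of_le (fun n => norm_nonneg (f n)) hf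
    ((summable_geometric_of_lt_one hc₀ hc₁).mul_right M)

theorem hasSum_of_eq_sum_range_add {E : Type*} [SeminormedAddCommGroup E] {f r : ℕ → E} {a : E}
    (hf : Summable fun n => ‖f n‖) (h : ∀ n, a = ∑ i ∈ range n, f i + r n)
    (hr : Tendsto r atTop (𝓝 0)) : HasSum f a := by
  refine (hasSum_iff_tendsto_nat_of_summable_norm hf).2 ?_
  have hsum : (fun n => ∑ i ∈ range n, f i) = fun n => a - r n := by
    funext n
    rw [h n, add_sub_cancel_right]
  simpa [hsum] using (tendsto_const_nhds (x := a)).sub hr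

theorem affine_shifts_implies_multiDiscounted_general
    {A : Type*} [Fintype A] [TopologicalSpace A] [DiscreteTopology A]
    (φ : (ℕ → A) → ℝ) (hcont : Continuous φ)
    (l w : A → ℝ) (hl : ∀ a, l a ∈ Set.Ico (0 : ℝ) 1)
    (haff : ∀ (a : A) (β : ℕ → A), φ (wcat [a] β) = l a * φ β + w a) :
    ∀ α : ℕ → A, φ α = ∑' n : ℕ, (∏ i ∈ Finset.range n, l (α i)) * w (α n) := by
  intro α
  have : Nonempty A := ⟨α 0⟩
  obtain ⟨a₀, hla₀⟩ := Finite.exists_max l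
  obtain ⟨b₀, hwb₀⟩ := Finite.exists_max fun a => ‖w a‖
  obtain ⟨C, hC⟩ := (isCompact_range hcont).isBounded.exists_norm_le
  have hl₀ : ∀ a, 0 ≤ l a := fun a => (hl a).1
  have hterms := summable_norm_of_norm_le_geometric (hl a₀).1 (hl a₀).2
    fun n => norm_prod_range_mul_le_pow_mul hl₀ hla₀ (hwb₀ (α n)) α n
  have hremainder := summable_norm_of_norm_le_geometric (hl a₀).1 (hl a₀).2
    fun n => norm_prod_range_mul_le_pow_mul hl₀ hla₀ (hC _ ⟨fun k => α (n + k), rfl⟩) α n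
  exact (hasSum_of_eq_sum_range_add hterms (eq_sum_range_add_prod_mul_shift φ l w haff α)
    hremainder.of_norm.tendsto_atTop_zero).tsum_eq.symm

theorem affine_shifts_implies_multiDiscounted
    {A : Type*} [Fintype A] [Nonempty A] [TopologicalSpace A] [DiscreteTopology A]
    (φ : (ℕ → A) → ℝ) (hcont : Continuous φ)
    (l w : A → ℝ) (hl : ∀ a, l a ∈ Set.Ico (0 : ℝ) 1)
    (haff : ∀ (a : A) (β : ℕ → A), φ (wcat [a] β) = l a * φ β + w a) :
    ∀ α : ℕ → A, φ α = ∑' n : ℕ, (∏ i ∈ Finset.range n, l (α i)) * w (α n) :=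
  affine_shifts_implies_multiDiscounted_general φ hcont l w hl haff
end
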